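/- For $b=(x_1,x_2,x_3,\bar x_3,\bar x_2,\bar x_1)\in B_l$, define $\langle c,\varphi(b)\rangle=\varphi_0(b)+2\varphi_1(b)+3\varphi_2(b)$ with $\varphi_0(b)=l-s(b)+\max A$, $\varphi_1(b)=x_1+(x_3-x_2+(\bar x_2-\bar x_3)_+)_+$, $\varphi_2(b)=x_2+\tfrac12(\bar x_3-x_3)_+$. Then $\langle c,\varphi(b)\rangle\ge l$ for all $b\in B_l$, with equality if and only if $x_1=\bar x_1$ and $x_2=x_3=\bar x_3=\bar x_2$. -/

import Mathlib

/-- An element `(x₁,x₂,x₃,x̄₃,x̄₂,x̄₁)` (fields `x1 x2 x3 y3 y2 y1`). -/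
structure C6 where
  x1 : ℤ
  x2 : ℤ
  x3 : ℤ
  y3 : ℤ
  y2 : ℤ
  y1 : ℤ
deriving DecidableEq

attribute [local instance] Classical.propDecidable

noncomputable section

/-- Membership in `B_{≥0}`: all coordinates nonnegative and `x₃ ≡ x̄₃ (mod 2)`. -/
def memB (b : C6) : Prop :=
  0 ≤ b.x1 ∧ 0 ≤ b.x2 ∧ 0 ≤ b.x3 ∧ 0 ≤ b.y3 ∧ 0 ≤ b.y2 ∧ 0 ≤ b.y1 ∧
    b.x3 % 2 = b.y3 % 2

/-- Return `some b` if all coordinates are nonnegative, else `none` (i.e. `0`). -/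
def chk (b : C6) : Option C6 :=
  if 0 ≤ b.x1 ∧ 0 ≤ b.x2 ∧ 0 ≤ b.x3 ∧ 0 ≤ b.y3 ∧ 0 ≤ b.y2 ∧ 0 ≤ b.y1 then some b
  else none

def zz1 (b : C6) : ℤ := b.y1 - b.x1
def zz2 (b : C6) : ℤ := b.y2 - b.y3
def zz3 (b : C6) : ℤ := b.x3 - b.x2
def zz4 (b : C6) : ℤ := (b.y3 - b.x3) / 2

def F1c (b : C6) : Prop :=
  zz1 b + zz2 b + zz3 b + 3 * zz4 b ≤ 0 ∧ zz1 b + zz2 b + 3 * zz4 b ≤ 0 ∧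
    zz1 b + zz2 b ≤ 0 ∧ zz1 b ≤ 0
def F2c (b : C6) : Prop :=
  zz1 b + zz2 b + zz3 b + 3 * zz4 b ≤ 0 ∧ zz2 b + 3 * zz4 b ≤ 0 ∧
    zz2 b ≤ 0 ∧ 0 < zz1 b
def F3c (b : C6) : Prop :=
  zz1 b + zz3 b + 3 * zz4 b ≤ 0 ∧ zz3 b + 3 * zz4 b ≤ 0 ∧ zz4 b ≤ 0 ∧
    0 < zz2 b ∧ 0 < zz1 b + zz2 b
def F4c (b : C6) : Prop :=
  0 < zz1 b + zz2 b + 3 * zz4 b ∧ 0 < zz2 b + 3 * zz4 b ∧ 0 < zz4 b ∧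
    zz3 b ≤ 0 ∧ zz1 b + zz3 b ≤ 0
def F5c (b : C6) : Prop :=
  0 < zz1 b + zz2 b + zz3 b + 3 * zz4 b ∧ 0 < zz3 b + 3 * zz4 b ∧
    0 < zz3 b ∧ zz1 b ≤ 0
def F6c (b : C6) : Prop :=
  0 < zz1 b + zz2 b + zz3 b + 3 * zz4 b ∧ 0 < zz1 b + zz3 b + 3 * zz4 b ∧
    0 < zz1 b + zz3 b ∧ 0 < zz1 b

def E1c (b : C6) : Prop :=
  zz1 b + zz2 b + zz3 b + 3 * zz4 b < 0 ∧ zz1 b + zz2 b + 3 * zz4 b < 0 ∧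
    zz1 b + zz2 b < 0 ∧ zz1 b < 0
def E2c (b : C6) : Prop :=
  zz1 b + zz2 b + zz3 b + 3 * zz4 b < 0 ∧ zz2 b + 3 * zz4 b < 0 ∧
    zz2 b < 0 ∧ 0 ≤ zz1 b
def E3c (b : C6) : Prop :=
  zz1 b + zz3 b + 3 * zz4 b < 0 ∧ zz3 b + 3 * zz4 b < 0 ∧ zz4 b < 0 ∧
    0 ≤ zz2 b ∧ 0 ≤ zz1 b + zz2 b
def E4c (b : C6) : Prop :=
  0 ≤ zz1 b + zz2 b + 3 * zz4 b ∧ 0 ≤ zz2 b + 3 * zz4 b ∧ 0 ≤ zz4 b ∧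
    zz3 b < 0 ∧ zz1 b + zz3 b < 0
def E5c (b : C6) : Prop :=
  0 ≤ zz1 b + zz2 b + zz3 b + 3 * zz4 b ∧ 0 ≤ zz3 b + 3 * zz4 b ∧
    0 ≤ zz3 b ∧ zz1 b < 0
def E6c (b : C6) : Prop :=
  0 ≤ zz1 b + zz2 b + zz3 b + 3 * zz4 b ∧ 0 ≤ zz1 b + zz3 b + 3 * zz4 b ∧
    0 ≤ zz1 b + zz3 b ∧ 0 ≤ zz1 b

/-- The operator `f̃₀` on `B_{≥0}`, given by the six cases `(F₁)–(F₆)`. -/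
def f0op (b : C6) : Option C6 :=
  if F1c b then chk ⟨b.x1 + 1, b.x2, b.x3, b.y3, b.y2, b.y1⟩
  else if F2c b then chk ⟨b.x1, b.x2, b.x3 + 1, b.y3 + 1, b.y2, b.y1 - 1⟩
  else if F3c b then chk ⟨b.x1, b.x2, b.x3 + 2, b.y3, b.y2 - 1, b.y1⟩
  else if F4c b then chk ⟨b.x1, b.x2 + 1, b.x3, b.y3 - 2, b.y2, b.y1⟩
  else if F5c b then chk ⟨b.x1 + 1, b.x2, b.x3 - 1, b.y3 - 1, b.y2, b.y1⟩
  else if F6c b then chk ⟨b.x1, b.x2, b.x3, b.y3, b.y2, b.y1 - 1⟩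
  else none

/-- The operator `ẽ₀` on `B_{≥0}`, given by the six cases `(E₁)–(E₆)`. -/
def e0op (b : C6) : Option C6 :=
  if E1c b then chk ⟨b.x1 - 1, b.x2, b.x3, b.y3, b.y2, b.y1⟩
  else if E2c b then chk ⟨b.x1, b.x2, b.x3 - 1, b.y3 - 1, b.y2, b.y1 + 1⟩
  else if E3c b then chk ⟨b.x1, b.x2, b.x3 - 2, b.y3, b.y2 + 1, b.y1⟩
  else if E4c b then chk ⟨b.x1, b.x2 - 1, b.x3, b.y3 + 2, b.y2, b.y1⟩
  else if E5c b then chk ⟨b.x1 - 1, b.x2, b.x3 + 1, b.y3 + 1, b.y2, b.y1⟩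
  else if E6c b then chk ⟨b.x1, b.x2, b.x3, b.y3, b.y2, b.y1 + 1⟩
  else none

/-- `s(b) = x₁+x₂+(x₃+x̄₃)/2+x̄₂+x̄₁`. -/
def sB (b : C6) : ℤ := b.x1 + b.x2 + (b.x3 + b.y3) / 2 + b.y2 + b.y1

/-- `max A` for `A = (0, z₁, z₁+z₂, z₁+z₂+3z₄, z₁+z₂+z₃+3z₄, 2z₁+z₂+z₃+3z₄)`. -/
def maxA (b : C6) : ℤ :=
  max 0 (max (zz1 b) (max (zz1 b + zz2 b) (max (zz1 b + zz2 b + 3 * zz4 b)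
    (max (zz1 b + zz2 b + zz3 b + 3 * zz4 b)
      (2 * zz1 b + zz2 b + zz3 b + 3 * zz4 b)))))

def phi0 (l : ℤ) (b : C6) : ℤ := l - sB b + maxA b

def eps0 (l : ℤ) (b : C6) : ℤ :=
  l - sB b + maxA b - (2 * zz1 b + zz2 b + zz3 b + 3 * zz4 b)

def phi1 (b : C6) : ℤ := b.x1 + max (b.x3 - b.x2 + max (b.y2 - b.y3) 0) 0

def phi2 (b : C6) : ℤ := b.x2 + max (b.y3 - b.x3) 0 / 2

/-! The level `l` cancels from `⟨c, φ(b)⟩ - l`, and since `x₃ ≡ x̄₃ (mod 2)` makes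
`x̄₃ - x₃ = 2 z₄` exact, the difference depends only on `z`: it is
`(max A - (z₁ + z₂)) + 2 ((z₃ + z₂⁺)⁺ - z₃) + 3 (z₄⁺ - z₄)`, a sum of nonnegative gaps.
If all three gaps vanish, comparing `max A = z₁ + z₂` with the other entries of `A`
forces `z = 0`, i.e. `x₁ = x̄₁` and `x₂ = x₃ = x̄₃ = x̄₂`. -/

section Defect

variable {R : Type*} [CommRing R] [LinearOrder R] (z₁ z₂ z₃ z₄ : R)

def maxAOf : R :=
  max 0 (max z₁ (max (z₁ + z₂) (max (z₁ + z₂ + 3 * z₄)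
    (max (z₁ + z₂ + z₃ + 3 * z₄) (2 * z₁ + z₂ + z₃ + 3 * z₄)))))

def phiDefect : R :=
  maxAOf z₁ z₂ z₃ z₄ + 2 * max (z₃ + max z₂ 0) 0 + 3 * max z₄ 0 - (z₁ + z₂ + 2 * z₃ + 3 * z₄)

theorem le_maxAOf :
    0 ≤ maxAOf z₁ z₂ z₃ z₄ ∧ z₁ ≤ maxAOf z₁ z₂ z₃ z₄ ∧ z₁ + z₂ ≤ maxAOf z₁ z₂ z₃ z₄ ∧
      z₁ + z₂ + 3 * z₄ ≤ maxAOf z₁ z₂ z₃ z₄ ∧ z₁ + z₂ + z₃ + 3 * z₄ ≤ maxAOf z₁ z₂ z₃ z₄ ∧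
      2 * z₁ + z₂ + z₃ + 3 * z₄ ≤ maxAOf z₁ z₂ z₃ z₄ := by
  simp only [maxAOf, le_max_iff, le_refl, true_or, or_true, and_self]

theorem phiDefect_nonneg [IsStrictOrderedRing R] : 0 ≤ phiDefect z₁ z₂ z₃ z₄ := by
  have hA := (le_maxAOf z₁ z₂ z₃ z₄).2.2.1
  have h₃ : z₃ ≤ max (z₃ + max z₂ 0) 0 :=
    (le_add_of_nonneg_right (le_max_right z₂ 0)).trans (le_max_left _ _)
  have h₄ : z₄ ≤ max z₄ 0 := le_max_left _ _
  unfold phiDefect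
  linarith

theorem phiDefect_eq_zero_iff [IsStrictOrderedRing R] :
    phiDefect z₁ z₂ z₃ z₄ = 0 ↔ z₁ = 0 ∧ z₂ = 0 ∧ z₃ = 0 ∧ z₄ = 0 := by
  refine ⟨fun h ↦ ?_, ?_⟩
  · obtain ⟨hM₀, hM₁, hM₂, hM₃, hM₄, hM₅⟩ := le_maxAOf z₁ z₂ z₃ z₄
    have hp₀ : 0 ≤ max (z₃ + max z₂ 0) 0 := le_max_right _ _
    have hp₃ : z₃ + max z₂ 0 ≤ max (z₃ + max z₂ 0) 0 := le_max_left _ _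
    have h₂ : z₂ ≤ max z₂ 0 := le_max_left _ _
    have h₂₀ : 0 ≤ max z₂ 0 := le_max_right _ _
    have h₄ : z₄ ≤ max z₄ 0 := le_max_left _ _
    have h₄₀ : 0 ≤ max z₄ 0 := le_max_right _ _
    unfold phiDefect at h
    have gapA : maxAOf z₁ z₂ z₃ z₄ = z₁ + z₂ := by linarith
    have gap₃ : max (z₃ + max z₂ 0) 0 = z₃ := by linarith
    have gap₄ : max z₄ 0 = z₄ := by linarith
    rw [gapA] at hM₀ hM₁ hM₃ hM₄ hM₅
    have hz₂ : z₂ = 0 := by linarith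
    have hz₄ : z₄ = 0 := by linarith
    have hz₃ : z₃ = 0 := by linarith
    exact ⟨by linarith, hz₂, hz₃, hz₄⟩
  · rintro ⟨rfl, rfl, rfl, rfl⟩
    simp [phiDefect, maxAOf]

end Defect

theorem maxA_eq_maxAOf (b : C6) : maxA b = maxAOf (zz1 b) (zz2 b) (zz3 b) (zz4 b) := rfl

theorem phi_sum_eq_add_phiDefect (l : ℤ) {b : C6} (hb : b.x3 % 2 = b.y3 % 2) :
    phi0 l b + 2 * phi1 b + 3 * phi2 b = l + phiDefect (zz1 b) (zz2 b) (zz3 b) (zz4 b) := by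
  have h₄ : b.y3 - b.x3 = 2 * zz4 b := by unfold zz4; omega
  have hs : sB b = b.x1 + b.x2 + b.x3 + zz4 b + b.y2 + b.y1 := by unfold sB; omega
  have h₂ : phi2 b = b.x2 + max (zz4 b) 0 := by
    unfold phi2; omega
  rw [h₂, phi0, phi1, hs, phiDefect, ← maxA_eq_maxAOf]
  simp only [zz1, zz2, zz3]
  linarith

theorem level_phi_ge_general (l : ℤ) (b : C6) (hb : memB b) :
    l ≤ phi0 l b + 2 * phi1 b + 3 * phi2 b ∧
    (phi0 l b + 2 * phi1 b + 3 * phi2 b = l ↔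
      b.x1 = b.y1 ∧ b.x2 = b.x3 ∧ b.x3 = b.y3 ∧ b.y3 = b.y2) := by
  have hpar : b.x3 % 2 = b.y3 % 2 := hb.2.2.2.2.2.2
  rw [phi_sum_eq_add_phiDefect l hpar, add_eq_left, phiDefect_eq_zero_iff]
  refine ⟨le_add_of_nonneg_right (phiDefect_nonneg ..), ?_⟩
  simp only [zz1, zz2, zz3, zz4]
  omega

/-- For all `b ∈ B_l`, `⟨c,φ(b)⟩ = φ₀(b)+2φ₁(b)+3φ₂(b) ≥ l`, with equality iff
`x₁ = x̄₁` and `x₂ = x₃ = x̄₃ = x̄₂`. -/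
theorem level_phi_ge (l : ℤ) (hl : 0 < l) (b : C6) (hb : memB b) (hbl : sB b ≤ l) :
    l ≤ phi0 l b + 2 * phi1 b + 3 * phi2 b ∧
    (phi0 l b + 2 * phi1 b + 3 * phi2 b = l ↔
      b.x1 = b.y1 ∧ b.x2 = b.x3 ∧ b.x3 = b.y3 ∧ b.y3 = b.y2) :=
  level_phi_ge_general l b hb

end
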